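/- arXiv:1304.7048 — 10 statements merged into one kernel-verified Lean document; each statement's English description precedes it below -/
import Mathlib

section
/- No incentive-compatible, individually rational, budget-respecting auction for one divisible good among n additive bidders with unit budgets can guarantee social welfare at least (1/α)·max_i v_i for any α < n. Formally: suppose x : ℝ_+^n → ℝ_+^n and π : ℝ_+^n → ℝ_+^n satisfy (i) Σ_i x_i(v) ≤ 1, (ii) 0 ≤ π_i(v) ≤ 1 for all i,v, (iii) incentive compatibility: v_i·x_i(v) − π_i(v) ≥ v_i·x_i(v'_i, v_{−i}) − π_i(v'_i, v_{−i}) for all v, v'_i, and (iv) Σ_j v_j·x_j(v) ≥ α^{−1}·max_i v_i for all v. Then α ≥ n. -/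
/-- No incentive-compatible, individually rational,
budget-respecting auction for one divisible good among `n` additive bidders
with unit budgets can guarantee welfare at least `α⁻¹ · max_i v_i` for `α < n`. -/
theorem stmt1 (n : ℕ) (hn : 0 < n) (α : ℝ) (hα : 0 < α)
    (x π : (Fin n → ℝ) → Fin n → ℝ)
    (hfeas : ∀ v : Fin n → ℝ, (∀ i, 0 ≤ v i) →
      (∀ i, 0 ≤ x v i) ∧ ∑ i, x v i ≤ 1)
    (hpay : ∀ v : Fin n → ℝ, (∀ i, 0 ≤ v i) → ∀ i, 0 ≤ π v i ∧ π v i ≤ 1)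
    (hic : ∀ v : Fin n → ℝ, (∀ i, 0 ≤ v i) → ∀ i, ∀ t : ℝ, 0 ≤ t →
      v i * x (Function.update v i t) i - π (Function.update v i t) i ≤
        v i * x v i - π v i)
    (happrox : ∀ v : Fin n → ℝ, (∀ i, 0 ≤ v i) → ∀ i,
      α⁻¹ * v i ≤ ∑ j, v j * x v j) :
    (n : ℝ) ≤ α := by
  have hn' : (1:ℝ) ≤ n := by exact_mod_cast hn
  -- Main estimate: for every T ≥ 1, n·α⁻¹ ≤ 1 + 2n/T
  have key : ∀ T : ℝ, 1 ≤ T → (n : ℝ) * α⁻¹ ≤ 1 + 2 * n / T := by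
    intro T hT
    have hT0 : (0:ℝ) < T := lt_of_lt_of_le one_pos hT
    set H : ℝ := n * T * T with hH
    have hH0 : 0 < H := by positivity
    have hHT : T ≤ H := by
      have h1 : (1:ℝ) ≤ (n:ℝ) * T := by nlinarith
      nlinarith
    set v : Fin n → ℝ := fun _ => T with hv
    have hvnn : ∀ i, 0 ≤ v i := fun i => le_of_lt hT0
    have hbound : ∀ i : Fin n, α⁻¹ - 2 / T ≤ x v i := by
      intro i
      set w := Function.update v i H with hw
      have hwi : w i = H := Function.update_self i H v
      have hwj : ∀ j, j ≠ i → w j = T := by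
        intro j hj; simp [hw, Function.update_of_ne hj, hv]
      have hwnn : ∀ j, 0 ≤ w j := by
        intro j
        by_cases h : j = i
        · subst h; rw [hwi]; exact le_of_lt hH0
        · rw [hwj j h]; exact le_of_lt hT0
      obtain ⟨hxw, hsw⟩ := hfeas w hwnn
      -- welfare bound at w : α⁻¹ * H ≤ H * x w i + T
      have h1 : α⁻¹ * H ≤ H * x w i + T := by
        have ha := happrox w hwnn i
        rw [hwi] at ha
        refine le_trans ha ?_
        have hsplit : ∑ j, w j * x w j
            = w i * x w i + ∑ j ∈ Finset.univ.erase i, w j * x w j := by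
          exact (Finset.add_sum_erase _ _ (Finset.mem_univ i)).symm
        rw [hsplit, hwi]
        have h2 : ∑ j ∈ Finset.univ.erase i, w j * x w j ≤ T := by
          calc ∑ j ∈ Finset.univ.erase i, w j * x w j
              = ∑ j ∈ Finset.univ.erase i, T * x w j := by
                apply Finset.sum_congr rfl
                intro j hj
                rw [hwj j (Finset.ne_of_mem_erase hj)]
            _ = T * ∑ j ∈ Finset.univ.erase i, x w j := by
                rw [Finset.mul_sum]
            _ ≤ T * ∑ j, x w j := by
                apply mul_le_mul_of_nonneg_left _ (le_of_lt hT0)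
                exact Finset.sum_le_sum_of_subset_of_nonneg
                  (Finset.subset_univ _) (fun j _ _ => hxw j)
            _ ≤ T * 1 := mul_le_mul_of_nonneg_left hsw (le_of_lt hT0)
            _ = T := mul_one T
        linarith
      -- IC bound: T * x w i ≤ T * x v i + 1
      have h3 : T * x w i ≤ T * x v i + 1 := by
        have hicv := hic v hvnn i H (le_of_lt hH0)
        have hvi : v i = T := rfl
        rw [hvi, ← hw] at hicv
        have hp1 := (hpay w hwnn i).2
        have hp2 := (hpay v hvnn i).1
        linarith
      -- combine: x w i ≥ α⁻¹ - T/H and x v i ≥ x w i - 1/T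
      have hTH : T / H * H = T := div_mul_cancel₀ _ (ne_of_gt hH0)
      have h4 : α⁻¹ - T / H ≤ x w i := by nlinarith [h1, hTH]
      have h1T : 1 / T * T = 1 := one_div_mul_cancel (ne_of_gt hT0)
      have h5 : x w i - 1 / T ≤ x v i := by nlinarith [h3, h1T]
      have h6 : T / H ≤ 1 / T := by
        rw [div_le_div_iff₀ hH0 hT0, hH]
        nlinarith
      have : 1 / T + 1 / T = 2 / T := by ring
      linarith
    -- sum the bounds
    obtain ⟨hxv, hsv⟩ := hfeas v hvnn
    have hsum : (n : ℝ) * (α⁻¹ - 2 / T) ≤ ∑ i, x v i := by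
      calc (n : ℝ) * (α⁻¹ - 2 / T) = ∑ _i : Fin n, (α⁻¹ - 2 / T) := by
            rw [Finset.sum_const, Finset.card_univ, Fintype.card_fin,
              nsmul_eq_mul]
        _ ≤ ∑ i, x v i := Finset.sum_le_sum (fun i _ => hbound i)
    have : (n : ℝ) * (α⁻¹ - 2 / T) ≤ 1 := le_trans hsum hsv
    have hnT : (n:ℝ) * (2 / T) = 2 * n / T := by ring
    nlinarith [this]
  -- conclude n * α⁻¹ ≤ 1
  have hle1 : (n : ℝ) * α⁻¹ ≤ 1 := by
    refine le_of_forall_pos_le_add ?_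
    intro ε hε
    have hTpos : (0:ℝ) < 2 * n / ε := by positivity
    set T : ℝ := max 1 (2 * n / ε) with hTdef
    have hT1 : 1 ≤ T := le_max_left _ _
    have hT2 : 2 * n / ε ≤ T := le_max_right _ _
    have hT0 : (0:ℝ) < T := lt_of_lt_of_le one_pos hT1
    have h := key T hT1
    have : 2 * n / T ≤ ε := by
      rw [div_le_iff₀ hT0]
      calc 2 * (n:ℝ) = ε * (2 * n / ε) := by field_simp
        _ ≤ ε * T := mul_le_mul_of_nonneg_left hT2 (le_of_lt hε)
    linarith
  -- n ≤ α
  have := (mul_inv_le_iff₀ hα).mp hle1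
  linarith
end

section
/- The allocation rule of the Uniform Price Auction is monotone: for every fixed v_{−i}, the allocation x_i(v_i, v_{−i}) is non-decreasing in v_i. Here, with players sorted so v_1 ≥ ... ≥ v_n and k the maximum integer with Σ_{j≤k} B_j ≤ v_k, the allocation is: if Σ_{j≤k} B_j > v_{k+1}, then x_i = B_i / Σ_{j≤k} B_j for i ≤ k and x_i = 0 otherwise; if Σ_{j≤k} B_j ≤ v_{k+1}, then x_i = B_i / v_{k+1} for i ≤ k, x_{k+1} = 1 − Σ_{j≤k} x_j, and x_i = 0 for i > k+1. -/
/-!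
Write `C(x)` for the total budget of the players whose value is at least `x`, and `D_i` for the
total budget of the players valued strictly above `i`. The clearing price
`max (Σ_{j≤k} B_j, v_{k+1})` equals `p = max_j min (v_j, C(v_j))`, and the good is sold greedily
down the ranking at price `p`, so that `x_i = min (B_i, (p - D_i)⁺) / p`.

Raising `v_i` to `t` can only shrink `D_i`, and it raises `p` (`C` grows pointwise), but not beyond
`max (p, D_i + B_i)`: only thresholds above the old `v_i` gain budget, and there `C ≤ D_i + B_i`.
Below `D_i + B_i` the share is `(1 - D_i / p)⁺`, increasing in `p`, so `x_i` cannot drop.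
-/

open Finset

/-- Permutation sorting the values in non-increasing order. -/
noncomputable def sortPerm {n : ℕ} (v : Fin n → ℝ) : Equiv.Perm (Fin n) :=
  Tuple.sort (fun i => -v i)

/-- `j`-th highest value (0-indexed), `0` for `j ≥ n`. -/
noncomputable def sortedVal {n : ℕ} (v : Fin n → ℝ) (j : ℕ) : ℝ :=
  if h : j < n then v (sortPerm v ⟨j, h⟩) else 0

/-- Budget of the player with the `j`-th highest value (0-indexed). -/
noncomputable def sortedBud {n : ℕ} (v B : Fin n → ℝ) (j : ℕ) : ℝ :=
  if h : j < n then B (sortPerm v ⟨j, h⟩) else 0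

open Classical in
/-- `kstar v B` is the maximum `k` such that the sum of the `k` largest-value
players' budgets is at most the `k`-th highest value. -/
noncomputable def kstar {n : ℕ} (v B : Fin n → ℝ) : ℕ :=
  Nat.findGreatest
    (fun k => ∑ j ∈ range k, sortedBud v B j ≤ sortedVal v (k-1)) n

/-- Allocation of the Uniform Price Auction to the player of rank `j`
(0-indexed): Case I if `∑_{j≤k} B_j > v_{k+1}`, Case II otherwise. -/
noncomputable def allocSorted {n : ℕ} (v B : Fin n → ℝ) (j : ℕ) : ℝ :=
  let k := kstar v B
  let S := ∑ i ∈ range k, sortedBud v B i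
  if sortedVal v k < S then
    (if j < k then sortedBud v B j / S else 0)
  else if j < k then sortedBud v B j / sortedVal v k
  else if j = k then 1 - S / sortedVal v k
  else 0

/-- Allocation of the Uniform Price Auction to player `i`. -/
noncomputable def UPA {n : ℕ} (v B : Fin n → ℝ) (i : Fin n) : ℝ :=
  allocSorted v B (((sortPerm v).symm i : Fin n) : ℕ)

variable {n : ℕ}

section Price

variable (v B : Fin n → ℝ)

noncomputable def budgetAtLeast (x : ℝ) : ℝ := ∑ l with x ≤ v l, B l

noncomputable def budgetAbove (x : ℝ) : ℝ := ∑ l with x < v l, B l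

/-- The clearing price of the auction (see `price_eq`), described without sorting so that it can
be compared across value profiles. -/
noncomputable def price : ℝ := ⨆ j, min (v j) (budgetAtLeast v B (v j))

lemma le_price (j : Fin n) : min (v j) (budgetAtLeast v B (v j)) ≤ price v B :=
  le_ciSup (f := fun j => min (v j) (budgetAtLeast v B (v j))) (Finite.bddAbove_range _) j

lemma min_le_price {x : ℝ} {j : Fin n} (hx : x ≤ v j) :
    min x (budgetAtLeast v B x) ≤ price v B := by
  obtain ⟨l, hl, hmin⟩ := (univ.filter (x ≤ v ·)).exists_min_image v ⟨j, by simp [hx]⟩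
  have hxl : x ≤ v l := (mem_filter.1 hl).2
  have hC : budgetAtLeast v B x = budgetAtLeast v B (v l) := by
    refine sum_congr (filter_congr fun m _ => ⟨fun hm => hmin m ?_, hxl.trans⟩) fun _ _ => rfl
    simpa using hm
  rw [hC]
  exact (min_le_min_right _ hxl).trans (le_price v B l)

lemma price_nonneg (hv : ∀ i, 0 ≤ v i) (hB : ∀ i, 0 ≤ B i) : 0 ≤ price v B :=
  Real.iSup_nonneg fun j => le_min (hv j) (sum_nonneg fun l _ => hB l)

lemma price_pos (hv : ∀ i, 0 < v i) (hB : ∀ i, 0 < B i) (i : Fin n) : 0 < price v B :=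
  (lt_min (hv i) (sum_pos (fun l _ => hB l) ⟨i, by simp⟩)).trans_le (le_price v B i)

end Price

lemma price_mono {v w B : Fin n → ℝ} (hB : ∀ i, 0 ≤ B i) (h : v ≤ w) :
    price v B ≤ price w B := by
  rcases isEmpty_or_nonempty (Fin n) with hn | hn
  · simp [price]
  refine ciSup_le fun j => le_trans ?_ (min_le_price w B (h j))
  refine min_le_min_left _ (sum_le_sum_of_subset_of_nonneg (fun l hl => ?_) fun l _ _ => hB l)
  simp only [mem_filter, mem_univ, true_and] at hl ⊢
  exact hl.trans (h l)

section Update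

variable {v B : Fin n → ℝ} {i : Fin n} {t : ℝ}

lemma budgetAbove_update_le (hB : ∀ i, 0 ≤ B i) (ht : v i ≤ t) :
    budgetAbove (Function.update v i t) B t ≤ budgetAbove v B (v i) := by
  refine sum_le_sum_of_subset_of_nonneg (fun l hl => ?_) fun l _ _ => hB l
  simp only [mem_filter, mem_univ, true_and] at hl ⊢
  rcases eq_or_ne l i with rfl | hli
  · simp at hl
  · rw [Function.update_of_ne hli] at hl
    exact ht.trans_lt hl

lemma price_update_le (hB : ∀ i, 0 ≤ B i) (ht : v i ≤ t) :
    price (Function.update v i t) B ≤ max (price v B) (budgetAbove v B (v i) + B i) := by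
  set w := Function.update v i t
  have : Nonempty (Fin n) := ⟨i⟩
  refine ciSup_le fun l => ?_
  rcases le_or_gt (w l) (v i) with hl | hl
  · -- below `v i`, raising `v i` changes nobody's membership in the budget set
    have hC : budgetAtLeast w B (w l) = budgetAtLeast v B (w l) := by
      refine sum_congr (filter_congr fun m _ => ?_) fun _ _ => rfl
      rcases eq_or_ne m i with rfl | hmi
      · simpa [w] using ⟨fun _ => hl, fun _ => hl.trans ht⟩
      · simp [w, Function.update_of_ne hmi]
    rw [hC]
    exact (min_le_price v B hl).trans (le_max_left _ _)
  · refine (min_le_right _ _).trans (le_trans ?_ (le_max_right _ _))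
    rw [budgetAbove, add_comm, ← sum_insert (by simp)]
    refine sum_le_sum_of_subset_of_nonneg (fun m hm => ?_) fun l _ _ => hB l
    rcases eq_or_ne m i with rfl | hmi
    · exact mem_insert_self _ _
    · simp only [mem_filter, mem_univ, true_and, w, Function.update_of_ne hmi] at hm
      exact mem_insert_of_mem (by simpa using hl.trans_le hm)

end Update

section Sorted

variable (v B : Fin n → ℝ)

lemma sortPerm_antitone : Antitone (v ∘ sortPerm v) := fun a b hab => by
  simpa [sortPerm] using Tuple.monotone_sort (fun i => -v i) hab

lemma sortPerm_strictAnti (hinj : Function.Injective v) : StrictAnti (v ∘ sortPerm v) :=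
  (sortPerm_antitone v).strictAnti_of_injective (hinj.comp (sortPerm v).injective)

@[simp]
lemma sortedVal_fin (j : Fin n) : sortedVal v j = v (sortPerm v j) := by
  simp [sortedVal]

@[simp]
lemma sortedBud_fin (j : Fin n) : sortedBud v B j = B (sortPerm v j) := by
  simp [sortedBud]

lemma sum_range_sortedBud {k : ℕ} (hk : k ≤ n) :
    ∑ j ∈ range k, sortedBud v B j = ∑ m : Fin n with m.val < k, B (sortPerm v m) := by
  rw [sum_filter]
  simp_rw [← sortedBud_fin v B]
  rw [Fin.sum_univ_eq_sum_range (fun m => if m < k then sortedBud v B m else 0), ← sum_filter]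
  congr 1
  ext m
  simp only [mem_range, mem_filter]
  omega

lemma sortedBud_nonneg (hB : ∀ i, 0 ≤ B i) (j : ℕ) : 0 ≤ sortedBud v B j := by
  unfold sortedBud
  split <;> simp [hB]

lemma sum_range_sortedBud_mono (hB : ∀ i, 0 ≤ B i) :
    Monotone fun k => ∑ j ∈ range k, sortedBud v B j := fun _ _ h =>
  sum_le_sum_of_subset_of_nonneg (range_subset_range.2 h) fun j _ _ => sortedBud_nonneg v B hB j

variable {v} (hinj : Function.Injective v)
include hinj

lemma budgetAbove_sortPerm (j : Fin n) :
    budgetAbove v B (v (sortPerm v j)) = ∑ m ∈ range j, sortedBud v B m := by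
  rw [sum_range_sortedBud v B j.is_le', budgetAbove, sum_filter, sum_filter,
    ← Equiv.sum_comp (sortPerm v)]
  exact sum_congr rfl fun m _ => if_congr (sortPerm_strictAnti v hinj).lt_iff_gt rfl rfl

lemma budgetAtLeast_sortPerm (j : Fin n) :
    budgetAtLeast v B (v (sortPerm v j)) = ∑ m ∈ range (j + 1), sortedBud v B m := by
  rw [sum_range_sortedBud v B j.is_lt, budgetAtLeast, sum_filter, sum_filter,
    ← Equiv.sum_comp (sortPerm v)]
  exact sum_congr rfl fun m _ =>
    if_congr ((sortPerm_strictAnti v hinj).le_iff_ge.trans Nat.lt_succ_iff.symm) rfl rfl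

end Sorted

section Kstar

variable (v B : Fin n → ℝ)

lemma kstar_le : kstar v B ≤ n := Nat.findGreatest_le n

lemma sum_le_sortedVal_kstar_sub_one (hk : kstar v B ≠ 0) :
    ∑ j ∈ range (kstar v B), sortedBud v B j ≤ sortedVal v (kstar v B - 1) := by
  unfold kstar at hk ⊢
  exact Nat.findGreatest_of_ne_zero rfl hk

lemma sortedVal_kstar_le_sum (hB : ∀ i, 0 ≤ B i) :
    sortedVal v (kstar v B) ≤ ∑ j ∈ range (kstar v B + 1), sortedBud v B j := by
  rcases (kstar_le v B).lt_or_eq with hk | hk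
  · have h := Nat.findGreatest_is_greatest (lt_add_one (kstar v B)) hk
    simp only [Nat.add_sub_cancel, not_le] at h
    exact h.le
  · rw [sortedVal, dif_neg hk.not_lt]
    exact sum_nonneg fun j _ => sortedBud_nonneg v B hB j

end Kstar

lemma price_eq {v B : Fin n → ℝ} (hv : ∀ i, 0 ≤ v i) (hB : ∀ i, 0 ≤ B i)
    (hinj : Function.Injective v) [Nonempty (Fin n)] :
    price v B = max (∑ j ∈ range (kstar v B), sortedBud v B j) (sortedVal v (kstar v B)) := by
  have hS := sum_range_sortedBud_mono v B hB
  apply le_antisymm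
  · refine ciSup_le fun j => ?_
    obtain ⟨m, rfl⟩ := (sortPerm v).surjective j
    rw [budgetAtLeast_sortPerm B hinj]
    rcases lt_or_ge (m : ℕ) (kstar v B) with hm | hm
    · exact (min_le_right _ _).trans ((hS hm).trans (le_max_left _ _))
    · refine (min_le_left _ _).trans (le_trans ?_ (le_max_right _ _))
      have hk : kstar v B < n := hm.trans_lt m.is_lt
      simpa [sortedVal, hk] using sortPerm_antitone v (show (⟨_, hk⟩ : Fin n) ≤ m from hm)
  · apply max_le
    · rcases eq_or_ne (kstar v B) 0 with hk | hk
      · simpa [hk] using price_nonneg v B hv hB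
      have hk' : kstar v B - 1 < n := by have := kstar_le v B; omega
      have h := le_price v B (sortPerm v ⟨_, hk'⟩)
      rwa [budgetAtLeast_sortPerm B hinj, Fin.val_mk,
        Nat.sub_add_cancel (Nat.one_le_iff_ne_zero.2 hk), ← sortedVal_fin v, Fin.val_mk,
        min_eq_right (sum_le_sortedVal_kstar_sub_one v B hk)] at h
    · rcases (kstar_le v B).lt_or_eq with hk | hk
      · have h := le_price v B (sortPerm v ⟨_, hk⟩)
        rwa [budgetAtLeast_sortPerm B hinj, ← sortedVal_fin v, Fin.val_mk,
          min_eq_left (sortedVal_kstar_le_sum v B hB)] at h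
      · simpa [sortedVal, hk] using price_nonneg v B hv hB

lemma Monotone.min_sub_posPart_eq {s : ℕ → ℝ} (hs : Monotone s) {k r : ℕ} {p : ℝ}
    (hk : s k ≤ p) (hk' : p ≤ s (k + 1)) :
    min (s (r + 1) - s r) (p - s r)⁺ =
      if r < k then s (r + 1) - s r else if r = k then p - s k else 0 := by
  have hr : 0 ≤ s (r + 1) - s r := sub_nonneg.2 (hs r.le_succ)
  split_ifs with hrk hrk'
  · have : s (r + 1) ≤ p := (hs hrk).trans hk
    rw [posPart_eq_self.2 (by linarith), min_eq_left (by linarith)]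
  · subst hrk'
    rw [posPart_eq_self.2 (by linarith), min_eq_right (by linarith)]
  · have : p ≤ s r := hk'.trans (hs (by omega))
    rw [posPart_eq_zero.2 (by linarith), min_eq_right hr]

theorem UPA_eq {v B : Fin n → ℝ} (hv : ∀ i, 0 < v i) (hB : ∀ i, 0 < B i)
    (hinj : Function.Injective v) (i : Fin n) :
    UPA v B i = min (B i) (price v B - budgetAbove v B (v i))⁺ / price v B := by
  have : Nonempty (Fin n) := ⟨i⟩
  obtain ⟨r, rfl⟩ := (sortPerm v).surjective i
  set s : ℕ → ℝ := fun m => ∑ j ∈ range m, sortedBud v B j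
  have hs : Monotone s := sum_range_sortedBud_mono v B fun l => (hB l).le
  have hp := price_eq (fun l => (hv l).le) (fun l => (hB l).le) hinj (B := B)
  have hBr : B (sortPerm v r) = s (r + 1) - s r := by simp [s, sum_range_succ]
  -- `s k ≤ p ≤ s (k + 1)` holds in both cases of the auction
  rw [budgetAbove_sortPerm B hinj, hBr, hs.min_sub_posPart_eq (k := kstar v B)
    (hp ▸ le_max_left _ _)
    (hp ▸ max_le (hs (kstar v B).le_succ) (sortedVal_kstar_le_sum v B fun l => (hB l).le))]
  have hp0 := (price_pos v B hv hB (sortPerm v r)).ne'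
  simp only [UPA, Equiv.symm_apply_apply, allocSorted]
  rw [hp] at hp0 ⊢
  split_ifs with hI
  all_goals first
    | rw [max_eq_left hI.le] at hp0 ⊢
    | rw [max_eq_right (not_lt.1 hI)] at hp0 ⊢
  all_goals simp [s, sum_range_succ, sub_div, hp0]

lemma posPart_sub_div_le_posPart_sub_div {D p p' : ℝ} (hD : 0 ≤ D) (hp : 0 < p)
    (hpp : p ≤ p') : (p - D)⁺ / p ≤ (p' - D)⁺ / p' := by
  have hp' := hp.trans_le hpp
  rcases le_or_gt p D with hpD | hDp
  · rw [posPart_eq_zero.2 (sub_nonpos.2 hpD), zero_div]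
    positivity
  · rw [posPart_eq_self.2 (by linarith), posPart_eq_self.2 (by linarith), sub_div, sub_div,
      div_self hp.ne', div_self hp'.ne']
    exact sub_le_sub_left (div_le_div_of_nonneg_left hD hp hpp) 1

lemma min_posPart_sub_div_le {b D D' p p' : ℝ} (hb : 0 ≤ b) (hD : 0 ≤ D) (hDD : D' ≤ D)
    (hp : 0 < p) (hpp : p ≤ p') (hup : p' ≤ max p (D + b)) :
    min b (p - D)⁺ / p ≤ min b (p' - D')⁺ / p' := by
  have hp' := hp.trans_le hpp
  calc min b (p - D)⁺ / p ≤ min b (p' - D)⁺ / p' := ?_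
    _ ≤ min b (p' - D')⁺ / p' :=
      div_le_div_of_nonneg_right (min_le_min_left _ (posPart_mono (by linarith))) hp'.le
  rcases hpp.eq_or_lt with rfl | hlt
  · rfl
  have hup' : p' - D ≤ b := by
    have := (le_max_iff.1 hup).resolve_left hlt.not_ge
    linarith
  rw [min_eq_right (show (p' - D)⁺ ≤ b from sup_le hup' hb)]
  exact (div_le_div_of_nonneg_right (min_le_right _ _) hp.le).trans
    (posPart_sub_div_le_posPart_sub_div hD hp hpp)

/-- the allocation rule of the Uniform Price Auction is monotone:
increasing one's own value (others fixed) never decreases one's allocation. -/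
theorem stmt3 {n : ℕ} (v B : Fin n → ℝ)
    (hv : ∀ i, 0 < v i) (hB : ∀ i, 0 < B i)
    (i : Fin n) (t : ℝ) (ht : v i ≤ t)
    (hinj : Function.Injective v)
    (hinj' : Function.Injective (Function.update v i t)) :
    UPA v B i ≤ UPA (Function.update v i t) B i := by
  have hv' : ∀ l, 0 < Function.update v i t l := fun l => by
    rcases eq_or_ne l i with rfl | hl
    · simpa using (hv l).trans_le ht
    · simpa [hl] using hv l
  have hB₀ : ∀ l, 0 ≤ B l := fun l => (hB l).le
  rw [UPA_eq hv hB hinj, UPA_eq hv' hB hinj', Function.update_self]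
  exact min_posPart_sub_div_le (hB i).le (sum_nonneg fun l _ => hB₀ l)
    (budgetAbove_update_le hB₀ ht) (price_pos v B hv hB i)
    (price_mono hB₀ (le_update_self_iff.2 ht)) (price_update_le hB₀ ht)
end

section
/- The Uniform Price Auction is a 2-approximation to the optimal liquid welfare: if x is its allocation, then W̄(x) ≥ (1/2)·W̄*, where W̄* = max over feasible allocations x' of Σ_i min(v_i·x'_i, B_i). Specifically, with players sorted so v_1 ≥ ... ≥ v_n and k the maximum integer with Σ_{j≤k} B_j ≤ v_k, one has W̄(x) ≥ Σ_{j≤k} B_j, W̄(x) ≥ v_{k+1}, and W̄* ≤ Σ_{j≤k} B_j + v_{k+1}. -/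
/-!
Let `S = ∑_{j ≤ k} B j`. In both cases of the auction every player `i ≤ k` pays his whole
budget at a price (`S` in Case I, `v (k+1)` in Case II) not exceeding `v i`, so his liquid
value is `B i`. In Case I nobody else gets anything and the welfare is `S > v (k+1)`; in
Case II player `k+1` receives the rest, whose value `v (k+1) - S` stays within his budget by
maximality of `k`, so the welfare is `v (k+1) ≥ S`. Conversely, any allocation gets at most
`S` from the first `k` players (budgets) and at most `v (k+1)` from the others, who share at
most one unit and value it at most `v (k+1)`. Hence the optimum is at most
`S + v (k+1) ≤ 2 W̄(x)`.
-/

open Finset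

noncomputable def liquidWelfare (n : ℕ) (v B x : ℕ → ℝ) : ℝ :=
  ∑ i ∈ Icc 1 n, min (v i * x i) (B i)

theorem Finset.sum_Icc_one_eq_add_sum_Ioc {M : Type*} [AddCommMonoid M] (f : ℕ → M)
    {k n : ℕ} (hkn : k ≤ n) :
    ∑ i ∈ Icc 1 n, f i = ∑ i ∈ Icc 1 k, f i + ∑ i ∈ Ioc k n, f i := by
  have hIcc (m : ℕ) : Icc 1 m = Ioc 0 m := Icc_add_one_left_eq_Ioc 0 m
  rw [hIcc, hIcc, sum_Ioc_consecutive f k.zero_le hkn]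

theorem min_mul_div_eq_right {v b p : ℝ} (hb : 0 ≤ b) (hp : 0 < p) (hpv : p ≤ v) :
    min (v * (b / p)) b = b := by
  refine min_eq_right ?_
  rw [← mul_div_assoc, le_div_iff₀ hp]
  exact mul_le_mul_of_nonneg_left hpv hb |>.trans_eq (mul_comm _ _)

theorem sum_min_mul_eq_zero {v B x : ℕ → ℝ} {s : Finset ℕ} (hB : ∀ i ∈ s, 0 ≤ B i)
    (hx : ∀ i ∈ s, x i = 0) : ∑ i ∈ s, min (v i * x i) (B i) = 0 :=
  sum_eq_zero fun i hi => by rw [hx i hi, mul_zero, min_eq_left (hB i hi)]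

section

variable {n k : ℕ} {v B x : ℕ → ℝ}

theorem value_nonneg (hv : ∀ i, 1 ≤ i → i ≤ n → 0 < v i) (hv0 : ∀ j, n < j → v j = 0)
    (i : ℕ) (hi : 1 ≤ i) : 0 ≤ v i := by
  rcases le_or_gt i n with hin | hni
  · exact (hv i hi hin).le
  · exact (hv0 i hni).ge

theorem liquidWelfare_le_sum_budgets_add {p : ℝ} (hkn : k ≤ n) (hx0 : ∀ i, 0 ≤ x i)
    (hx1 : ∑ i ∈ Icc 1 n, x i ≤ 1) (hp : 0 ≤ p) (hvp : ∀ i, k < i → i ≤ n → v i ≤ p) :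
    liquidWelfare n v B x ≤ ∑ i ∈ Icc 1 k, B i + p := by
  have hsub : Ioc k n ⊆ Icc 1 n := fun i hi => by
    simp only [mem_Ioc, mem_Icc] at hi ⊢
    omega
  have htail : ∑ i ∈ Ioc k n, x i ≤ 1 :=
    (sum_le_sum_of_subset_of_nonneg hsub fun i _ _ => hx0 i).trans hx1
  calc liquidWelfare n v B x
      = ∑ i ∈ Icc 1 k, min (v i * x i) (B i) + ∑ i ∈ Ioc k n, min (v i * x i) (B i) :=
        sum_Icc_one_eq_add_sum_Ioc _ hkn
    _ ≤ ∑ i ∈ Icc 1 k, B i + ∑ i ∈ Ioc k n, p * x i := by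
        gcongr with i hi i hi
        · exact min_le_right _ _
        · obtain ⟨hki, hin⟩ := mem_Ioc.mp hi
          exact (min_le_left _ _).trans (mul_le_mul_of_nonneg_right (hvp i hki hin) (hx0 i))
    _ ≤ ∑ i ∈ Icc 1 k, B i + p := by
        rw [← mul_sum]
        gcongr
        exact mul_le_of_le_one_right hp htail

theorem liquidWelfare_eq_sum_budgets (hkn : k ≤ n) (hB : ∀ i, 1 ≤ i → i ≤ n → 0 ≤ B i)
    (hS : 0 < ∑ j ∈ Icc 1 k, B j) (hvS : ∀ i, 1 ≤ i → i ≤ k → ∑ j ∈ Icc 1 k, B j ≤ v i)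
    (hx : ∀ i, 1 ≤ i → i ≤ n → x i = if i ≤ k then B i / ∑ j ∈ Icc 1 k, B j else 0) :
    liquidWelfare n v B x = ∑ j ∈ Icc 1 k, B j := by
  have hhead : ∑ i ∈ Icc 1 k, min (v i * x i) (B i) = ∑ i ∈ Icc 1 k, B i :=
    sum_congr rfl fun i hi => by
      obtain ⟨h1i, hik⟩ := mem_Icc.mp hi
      rw [hx i h1i (hik.trans hkn), if_pos hik]
      exact min_mul_div_eq_right (hB i h1i (hik.trans hkn)) hS (hvS i h1i hik)
  have htail : ∑ i ∈ Ioc k n, min (v i * x i) (B i) = 0 := by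
    refine sum_min_mul_eq_zero (fun i hi => ?_) fun i hi => ?_ <;>
      obtain ⟨hki, hin⟩ := mem_Ioc.mp hi
    · exact hB i (by omega) hin
    · rw [hx i (by omega) hin, if_neg (by omega)]
  rw [liquidWelfare, sum_Icc_one_eq_add_sum_Ioc _ hkn, hhead, htail, add_zero]

theorem liquidWelfare_eq_price (hkn : k < n) (hB : ∀ i, 1 ≤ i → i ≤ n → 0 ≤ B i)
    (hp : 0 < v (k + 1)) (hpS : v (k + 1) ≤ ∑ j ∈ Icc 1 (k + 1), B j)
    (hvp : ∀ i, 1 ≤ i → i ≤ k → v (k + 1) ≤ v i)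
    (hx : ∀ i, 1 ≤ i → i ≤ n → x i = if i ≤ k then B i / v (k + 1)
      else if i = k + 1 then 1 - (∑ j ∈ Icc 1 k, B j) / v (k + 1) else 0) :
    liquidWelfare n v B x = v (k + 1) := by
  rw [sum_Icc_succ_top (by omega)] at hpS
  have hhead : ∑ i ∈ Icc 1 k, min (v i * x i) (B i) = ∑ i ∈ Icc 1 k, B i :=
    sum_congr rfl fun i hi => by
      obtain ⟨h1i, hik⟩ := mem_Icc.mp hi
      rw [hx i h1i (by omega), if_pos hik]
      exact min_mul_div_eq_right (hB i h1i (by omega)) hp (hvp i h1i hik)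
  have hnext : min (v (k + 1) * x (k + 1)) (B (k + 1)) = v (k + 1) - ∑ j ∈ Icc 1 k, B j := by
    rw [hx (k + 1) (by omega) hkn, if_neg (by omega), if_pos rfl, mul_one_sub,
      mul_div_cancel₀ _ hp.ne']
    exact min_eq_left (by linarith)
  have htail : ∑ i ∈ Ioc (k + 1) n, min (v i * x i) (B i) = 0 := by
    refine sum_min_mul_eq_zero (fun i hi => ?_) fun i hi => ?_ <;>
      obtain ⟨hki, hin⟩ := mem_Ioc.mp hi
    · exact hB i (by omega) hin
    · rw [hx i (by omega) hin, if_neg (by omega), if_neg (by omega)]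
  rw [liquidWelfare, sum_Icc_one_eq_add_sum_Ioc (k := k + 1) _ hkn, sum_Icc_succ_top (by omega),
    hhead, hnext, htail]
  ring

theorem liquidWelfare_uniformPrice_eq_max (hv : ∀ i, 1 ≤ i → i ≤ n → 0 < v i)
    (hB : ∀ i, 1 ≤ i → i ≤ n → 0 < B i) (hsort : ∀ i j, 1 ≤ i → i ≤ j → j ≤ n → v j ≤ v i)
    (hv0 : ∀ j, n < j → v j = 0) (hkn : k ≤ n) (hk : k = 0 ∨ ∑ j ∈ Icc 1 k, B j ≤ v k)
    (hkmax : ∀ m, k < m → m ≤ n → v m < ∑ j ∈ Icc 1 m, B j)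
    (hxI : v (k + 1) < ∑ j ∈ Icc 1 k, B j → ∀ i, 1 ≤ i → i ≤ n →
      x i = if i ≤ k then B i / ∑ j ∈ Icc 1 k, B j else 0)
    (hxII : ∑ j ∈ Icc 1 k, B j ≤ v (k + 1) → ∀ i, 1 ≤ i → i ≤ n →
      x i = if i ≤ k then B i / v (k + 1)
            else if i = k + 1 then 1 - (∑ j ∈ Icc 1 k, B j) / v (k + 1) else 0) :
    liquidWelfare n v B x = max (∑ j ∈ Icc 1 k, B j) (v (k + 1)) := by
  rcases n.eq_zero_or_pos with rfl | hn
  · obtain rfl : k = 0 := by omega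
    simp [liquidWelfare, hv0 1 one_pos]
  have hB' (i) (h1i : 1 ≤ i) (hin : i ≤ n) : 0 ≤ B i := (hB i h1i hin).le
  rcases lt_or_ge (v (k + 1)) (∑ j ∈ Icc 1 k, B j) with hI | hII
  · rw [max_eq_left hI.le]
    refine liquidWelfare_eq_sum_budgets hkn hB' ((value_nonneg hv hv0 _ (by omega)).trans_lt hI)
      (fun i h1i hik => ?_) (hxI hI)
    rcases hk with rfl | hSk
    · omega
    · exact hSk.trans (hsort i k h1i hik hkn)
  · rw [max_eq_right hII]
    have hkn' : k < n := by
      refine hkn.lt_of_ne fun hkn => ?_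
      subst hkn
      have hS : 0 < ∑ j ∈ Icc 1 k, B j :=
        sum_pos (fun i hi => hB i (mem_Icc.mp hi).1 (mem_Icc.mp hi).2) (nonempty_Icc.mpr hn)
      linarith [hv0 (k + 1) (lt_add_one k)]
    exact liquidWelfare_eq_price hkn' hB' (hv _ (by omega) hkn') (hkmax _ (lt_add_one k) hkn').le
      (fun i h1i hik => hsort i (k + 1) h1i (by omega) hkn') (hxII hII)

end

/-- the Uniform Price Auction is a 2-approximation to the optimal
liquid welfare.  Players are sorted `v 1 ≥ ... ≥ v n > 0` (1-indexed, `v j = 0`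
for `j > n`), `k` is the maximum integer with `∑_{j=1}^k B j ≤ v k`, and the
allocation `x` is given by Case I / Case II of the auction.  Then
`W̄(x) ≥ ∑_{j≤k} B j`, `W̄(x) ≥ v (k+1)`, `W̄* ≤ ∑_{j≤k} B j + v (k+1)`, and
`W̄(x) ≥ W̄*/2`. -/
theorem stmt4 (n : ℕ) (v B : ℕ → ℝ)
    (hv : ∀ i, 1 ≤ i → i ≤ n → 0 < v i) (hB : ∀ i, 1 ≤ i → i ≤ n → 0 < B i)
    (hsort : ∀ i j, 1 ≤ i → i ≤ j → j ≤ n → v j ≤ v i)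
    (hv0 : ∀ j, n < j → v j = 0)
    (k : ℕ) (hkn : k ≤ n)
    (hk : k = 0 ∨ ∑ j ∈ Finset.Icc 1 k, B j ≤ v k)
    (hkmax : ∀ m, k < m → m ≤ n → v m < ∑ j ∈ Finset.Icc 1 m, B j)
    (x : ℕ → ℝ)
    (hxI : v (k+1) < ∑ j ∈ Finset.Icc 1 k, B j → ∀ i, 1 ≤ i → i ≤ n →
      x i = if i ≤ k then B i / ∑ j ∈ Finset.Icc 1 k, B j else 0)
    (hxII : ∑ j ∈ Finset.Icc 1 k, B j ≤ v (k+1) → ∀ i, 1 ≤ i → i ≤ n →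
      x i = if i ≤ k then B i / v (k+1)
            else if i = k+1 then 1 - (∑ j ∈ Finset.Icc 1 k, B j) / v (k+1)
            else 0) :
    (∑ j ∈ Finset.Icc 1 k, B j ≤ ∑ i ∈ Finset.Icc 1 n, min (v i * x i) (B i)) ∧
    (v (k+1) ≤ ∑ i ∈ Finset.Icc 1 n, min (v i * x i) (B i)) ∧
    (∀ xstar : ℕ → ℝ, (∀ i, 0 ≤ xstar i) → ∑ i ∈ Finset.Icc 1 n, xstar i ≤ 1 →
      ∑ i ∈ Finset.Icc 1 n, min (v i * xstar i) (B i) ≤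
        (∑ j ∈ Finset.Icc 1 k, B j) + v (k+1)) ∧
    (∀ xstar : ℕ → ℝ, (∀ i, 0 ≤ xstar i) → ∑ i ∈ Finset.Icc 1 n, xstar i ≤ 1 →
      ∑ i ∈ Finset.Icc 1 n, min (v i * xstar i) (B i) ≤
        2 * ∑ i ∈ Finset.Icc 1 n, min (v i * x i) (B i)) := by
  have hW : ∑ i ∈ Icc 1 n, min (v i * x i) (B i) = max (∑ j ∈ Icc 1 k, B j) (v (k + 1)) :=
    liquidWelfare_uniformPrice_eq_max hv hB hsort hv0 hkn hk hkmax hxI hxII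
  have hopt (xstar : ℕ → ℝ) (hx0 : ∀ i, 0 ≤ xstar i) (hx1 : ∑ i ∈ Icc 1 n, xstar i ≤ 1) :
      ∑ i ∈ Icc 1 n, min (v i * xstar i) (B i) ≤ ∑ j ∈ Icc 1 k, B j + v (k + 1) :=
    liquidWelfare_le_sum_budgets_add hkn hx0 hx1 (value_nonneg hv hv0 _ (by omega))
      fun i hki hin => hsort (k + 1) i (by omega) hki hin
  rw [hW]
  refine ⟨le_max_left _ _, le_max_right _ _, hopt, fun xstar hx0 hx1 => ?_⟩
  linarith [hopt xstar hx0 hx1, le_max_left (∑ j ∈ Icc 1 k, B j) (v (k + 1)),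
    le_max_right (∑ j ∈ Icc 1 k, B j) (v (k + 1))]
end

section
/- In the Uniform Price Auction, for every feasible allocation x̄*, one has Σ_i min(v_i·x̄*_i, B_i) ≤ Σ_{i=1}^k B_i + v_{k+1}, where players are sorted so v_1 ≥ ... ≥ v_n and k is the maximum integer with Σ_{j=1}^k B_j ≤ v_k. -/
/-! The first `k` players contribute at most their budgets. Every later player has value at most
`v (k+1)`, so together they contribute at most `v (k+1)` times their total allocation, which is at
most one. -/

open Finset

theorem sum_min_mul_le_of_le {ι : Type*} (s : Finset ι) (v x B : ι → ℝ) {c : ℝ} (hc : 0 ≤ c)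
    (hx : ∀ i ∈ s, 0 ≤ x i) (hvc : ∀ i ∈ s, v i ≤ c) (hsum : ∑ i ∈ s, x i ≤ 1) :
    ∑ i ∈ s, min (v i * x i) (B i) ≤ c :=
  calc ∑ i ∈ s, min (v i * x i) (B i)
      ≤ ∑ i ∈ s, c * x i :=
        sum_le_sum fun i hi => (min_le_left _ _).trans
          (mul_le_mul_of_nonneg_right (hvc i hi) (hx i hi))
    _ = c * ∑ i ∈ s, x i := (mul_sum _ _ _).symm
    _ ≤ c := mul_le_of_le_one_right hc hsum

theorem stmt5_general (n : ℕ) (v B : ℕ → ℝ)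
    (hv : ∀ i, 1 ≤ i → i ≤ n → 0 < v i)
    (hsort : ∀ i j, 1 ≤ i → i ≤ j → j ≤ n → v j ≤ v i)
    (hv0 : ∀ j, n < j → v j = 0)
    (k : ℕ) (hkn : k ≤ n) :
    ∀ xstar : ℕ → ℝ, (∀ i, 0 ≤ xstar i) → ∑ i ∈ Finset.Icc 1 n, xstar i ≤ 1 →
      ∑ i ∈ Finset.Icc 1 n, min (v i * xstar i) (B i) ≤
        (∑ j ∈ Finset.Icc 1 k, B j) + v (k+1) := by
  intro x hx hsum
  have hIcc (m : ℕ) : Icc 1 m = Ioc 0 m := Icc_add_one_left_eq_Ioc 0 m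
  have hvk : 0 ≤ v (k+1) := by
    rcases le_or_gt (k+1) n with h | h
    · exact (hv _ (by omega) h).le
    · exact (hv0 _ h).ge
  simp only [hIcc] at hsum ⊢
  rw [← sum_Ioc_consecutive _ (Nat.zero_le k) hkn]
  refine add_le_add (sum_le_sum fun i _ => min_le_right _ _)
    (sum_min_mul_le_of_le _ v x B hvk (fun i _ => hx i)
      (fun i hi => hsort _ _ (by omega) (mem_Ioc.1 hi).1 (mem_Ioc.1 hi).2) ?_)
  exact (sum_le_sum_of_subset_of_nonneg (Ioc_subset_Ioc_left k.zero_le)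
    fun i _ _ => hx i).trans hsum

/-- with players sorted `v 1 ≥ ... ≥ v n > 0` (1-indexed, `v j = 0`
for `j > n`) and `k` the maximum integer with `∑_{j=1}^k B j ≤ v k`, every
feasible allocation `xstar` has liquid welfare at most `∑_{j=1}^k B j + v (k+1)`. -/
theorem stmt5 (n : ℕ) (v B : ℕ → ℝ)
    (hv : ∀ i, 1 ≤ i → i ≤ n → 0 < v i) (hB : ∀ i, 1 ≤ i → i ≤ n → 0 < B i)
    (hsort : ∀ i j, 1 ≤ i → i ≤ j → j ≤ n → v j ≤ v i)
    (hv0 : ∀ j, n < j → v j = 0)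
    (k : ℕ) (hkn : k ≤ n)
    (hk : k = 0 ∨ ∑ j ∈ Finset.Icc 1 k, B j ≤ v k)
    (hkmax : ∀ m, k < m → m ≤ n → v m < ∑ j ∈ Finset.Icc 1 m, B j) :
    ∀ xstar : ℕ → ℝ, (∀ i, 0 ≤ xstar i) → ∑ i ∈ Finset.Icc 1 n, xstar i ≤ 1 →
      ∑ i ∈ Finset.Icc 1 n, min (v i * xstar i) (B i) ≤
        (∑ j ∈ Finset.Icc 1 k, B j) + v (k+1) :=
  stmt5_general n v B hv hsort hv0 k hkn
end

section
/- No incentive-compatible mechanism for selling one divisible good to two players with equal budgets B_1 = B_2 = 1 can be a γ-approximation to the liquid welfare for γ < 4/3. Formally: if x(v_1,v_2) is a monotone allocation rule (x_i non-decreasing in v_i) with x_1 + x_2 ≤ 1 that guarantees min(1, v_1·x_1) + min(1, v_2·x_2) ≥ γ^{−1}·W̄*(v_1,v_2) for all (v_1,v_2), then γ ≥ 4/3. -/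
/-- Optimal liquid welfare for two players with unit budgets and one unit of a
divisible good. -/
noncomputable def Wstar (v1 v2 : ℝ) : ℝ :=
  sSup {w | ∃ y1 y2 : ℝ, 0 ≤ y1 ∧ 0 ≤ y2 ∧ y1 + y2 ≤ 1 ∧
    w = min 1 (v1 * y1) + min 1 (v2 * y2)}

lemma Wstar_bdd (v1 v2 : ℝ) :
    BddAbove {w | ∃ y1 y2 : ℝ, 0 ≤ y1 ∧ 0 ≤ y2 ∧ y1 + y2 ≤ 1 ∧
      w = min 1 (v1 * y1) + min 1 (v2 * y2)} := by
  refine ⟨2, ?_⟩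
  rintro w ⟨y1, y2, _, _, _, rfl⟩
  have h1 : min 1 (v1 * y1) ≤ 1 := min_le_left _ _
  have h2 : min 1 (v2 * y2) ≤ 1 := min_le_left _ _
  linarith

lemma Wstar_ge_one_alpha (α : ℝ) (hα : 1 ≤ α) : 2 - 1/α ≤ Wstar 1 α := by
  have hα0 : 0 < α := lt_of_lt_of_le one_pos hα
  refine le_csSup (Wstar_bdd 1 α) ⟨1 - 1/α, 1/α, ?_, ?_, by ring_nf; rfl, ?_⟩
  · have : 1/α ≤ 1 := by rw [div_le_one hα0]; exact hα
    linarith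
  · positivity
  · have h1 : min 1 (1 * (1 - 1/α)) = 1 - 1/α := by
      rw [one_mul, min_eq_right]
      have : (0:ℝ) ≤ 1/α := by positivity
      linarith
    have h2 : α * (1/α) = 1 := by field_simp
    rw [h1, h2, min_self]
    ring

lemma Wstar_ge_alpha_one (α : ℝ) (hα : 1 ≤ α) : 2 - 1/α ≤ Wstar α 1 := by
  have hα0 : 0 < α := lt_of_lt_of_le one_pos hα
  refine le_csSup (Wstar_bdd α 1) ⟨1/α, 1 - 1/α, ?_, ?_, by ring_nf; rfl, ?_⟩
  · positivity
  · have : 1/α ≤ 1 := by rw [div_le_one hα0]; exact hα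
    linarith
  · have h1 : min 1 (1 * (1 - 1/α)) = 1 - 1/α := by
      rw [one_mul, min_eq_right]
      have : (0:ℝ) ≤ 1/α := by positivity
      linarith
    have h2 : α * (1/α) = 1 := by field_simp
    rw [h2, h1, min_self]
    ring

/-- no monotone (hence incentive-compatible) allocation rule for
two players with unit budgets is a `γ`-approximation to the liquid welfare for
`γ < 4/3`. -/
theorem stmt10 (γ : ℝ) (hγ : 0 < γ)
    (x1 x2 : ℝ → ℝ → ℝ)
    (hfeas : ∀ v1 v2, 0 < v1 → 0 < v2 →
      0 ≤ x1 v1 v2 ∧ 0 ≤ x2 v1 v2 ∧ x1 v1 v2 + x2 v1 v2 ≤ 1)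
    (hmono1 : ∀ v2 a b, 0 < a → a ≤ b → x1 a v2 ≤ x1 b v2)
    (hmono2 : ∀ v1 a b, 0 < a → a ≤ b → x2 v1 a ≤ x2 v1 b)
    (happrox : ∀ v1 v2, 0 < v1 → 0 < v2 →
      γ⁻¹ * Wstar v1 v2 ≤ min 1 (v1 * x1 v1 v2) + min 1 (v2 * x2 v1 v2)) :
    4/3 ≤ γ := by
  set c := γ⁻¹ with hc
  have hc0 : 0 < c := inv_pos.mpr hγ
  -- key bound: for every α ≥ 1, 2 * (c * (2 - 1/α) - 1) ≤ 1
  have key : ∀ α : ℝ, 1 ≤ α → 2 * (c * (2 - 1/α) - 1) ≤ 1 := by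
    intro α hα
    have hα0 : 0 < α := lt_of_lt_of_le one_pos hα
    -- at (1, α): player 1 gets at least c*(2-1/α) - 1
    have h1 : c * (2 - 1/α) - 1 ≤ x1 1 α := by
      have happ := happrox 1 α one_pos hα0
      have hW := Wstar_ge_one_alpha α hα
      have hmul : c * (2 - 1/α) ≤ c * Wstar 1 α :=
        mul_le_mul_of_nonneg_left hW hc0.le
      have hm1 : min 1 (1 * x1 1 α) ≤ x1 1 α := by
        rw [one_mul]; exact min_le_right _ _
      have hm2 : min 1 (α * x2 1 α) ≤ 1 := min_le_left _ _
      linarith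
    -- at (α, 1): player 2 gets at least c*(2-1/α) - 1
    have h2 : c * (2 - 1/α) - 1 ≤ x2 α 1 := by
      have happ := happrox α 1 hα0 one_pos
      have hW := Wstar_ge_alpha_one α hα
      have hmul : c * (2 - 1/α) ≤ c * Wstar α 1 :=
        mul_le_mul_of_nonneg_left hW hc0.le
      have hm1 : min 1 (α * x1 α 1) ≤ 1 := min_le_left _ _
      have hm2 : min 1 (1 * x2 α 1) ≤ x2 α 1 := by
        rw [one_mul]; exact min_le_right _ _
      linarith
    -- monotonicity into (α, α)
    have hm1 : x1 1 α ≤ x1 α α := hmono1 α 1 α one_pos hα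
    have hm2 : x2 α 1 ≤ x2 α α := hmono2 α 1 α one_pos hα
    have hsum := (hfeas α α hα0 hα0).2.2
    linarith
  -- conclude c ≤ 3/4
  have hc34 : c ≤ 3/4 := by
    by_contra h
    push_neg at h
    have hε : 0 < 4*c - 3 := by linarith
    set α : ℝ := max 1 (2*c/(4*c-3)) + 1 with hαdef
    have hα1 : 1 ≤ α := by
      have := le_max_left 1 (2*c/(4*c-3)); simp only [hαdef]; linarith
    have hα0 : 0 < α := lt_of_lt_of_le one_pos hα1
    have hαbig : 2*c/(4*c-3) < α := by
      have := le_max_right 1 (2*c/(4*c-3)); simp only [hαdef]; linarith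
    have h2c : 2*c/α < 4*c - 3 := by
      rw [div_lt_iff₀ hα0]
      have h' : 2*c < α * (4*c-3) := (div_lt_iff₀ hε).mp hαbig
      nlinarith
    have hk := key α hα1
    have : 2 * (c * (2 - 1/α)) = 4*c - 2*c/α := by ring
    nlinarith [hk]
  -- from γ⁻¹ ≤ 3/4 and γ > 0, conclude 4/3 ≤ γ
  have : 1 = γ * γ⁻¹ := (mul_inv_cancel₀ (ne_of_gt hγ)).symm
  nlinarith [this, hc34, hγ]
end

section
/- The allocation rule of the 4/3-approximation auction for two players with unit budgets is monotone: defining for v_1 ≥ v_2 the allocation x(v_1,v_2) = (1,0) if v_2 ≤ 1/3; x(v_1,v_2) = (1/4 + 1/(4v_2), 3/4 − 1/(4v_2)) if 1/3 ≤ v_2 ≤ 1; x(v_1,v_2) = (1/2, 1/2) if v_2 ≥ 1 (and symmetrically for v_2 ≥ v_1, with x = (1/2,1/2) on the diagonal), each player's allocation is non-decreasing in their own value. -/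
/-- Allocation to the higher-value player, as a function of the lower value. -/
noncomputable def hiAlloc (lo : ℝ) : ℝ :=
  if lo ≤ 1/3 then 1 else if lo ≤ 1 then 1/4 + 1/(4*lo) else 1/2

/-- Allocation to player 1 in the 4/3-approximation auction for two players
with unit budgets (symmetric; player 2 gets `alloc1 v2 v1`). -/
noncomputable def alloc1 (v1 v2 : ℝ) : ℝ :=
  if v1 = v2 then 1/2 else if v2 < v1 then hiAlloc v2 else 1 - hiAlloc v1

lemma hiAlloc_half_le {lo : ℝ} (h : 0 < lo) : 1/2 ≤ hiAlloc lo := by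
  unfold hiAlloc
  split_ifs with h1 h2
  · norm_num
  · have h4 : (0:ℝ) < 4*lo := by linarith
    have : 1/4 ≤ 1/(4*lo) := by rw [le_div_iff₀ h4]; nlinarith
    linarith
  · norm_num

lemma hiAlloc_le_one {lo : ℝ} (h : 0 < lo) : hiAlloc lo ≤ 1 := by
  unfold hiAlloc
  split_ifs with h1 h2
  · norm_num
  · have hlo : 1/3 < lo := lt_of_not_ge h1
    have h4 : (0:ℝ) < 4*lo := by linarith
    have : 1/(4*lo) ≤ 3/4 := by rw [div_le_iff₀ h4]; nlinarith
    linarith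
  · norm_num

lemma hiAlloc_anti {a b : ℝ} (ha : 0 < a) (hab : a ≤ b) : hiAlloc b ≤ hiAlloc a := by
  have hb : 0 < b := ha.trans_le hab
  rcases le_or_gt a (1/3) with ha3 | ha3
  · have h : hiAlloc a = 1 := by rw [hiAlloc, if_pos ha3]
    rw [h]; exact hiAlloc_le_one hb
  · rcases le_or_gt b 1 with hb1 | hb1
    · have ha1 : a ≤ 1 := hab.trans hb1
      have hb3 : ¬ b ≤ 1/3 := by push_neg; linarith
      rw [hiAlloc, hiAlloc, if_neg (not_le.mpr ha3), if_neg hb3, if_pos ha1, if_pos hb1]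
      have : 1/(4*b) ≤ 1/(4*a) := one_div_le_one_div_of_le (by linarith) (by linarith)
      linarith
    · have h : hiAlloc b = 1/2 := by
        rw [hiAlloc, if_neg (by push_neg; linarith), if_neg (not_le.mpr hb1)]
      rw [h]; exact hiAlloc_half_le ha

/-- the allocation rule of the 4/3-approximation auction is
monotone in each player's own value. -/
theorem stmt11 (v2 : ℝ) (hv2 : 0 < v2) :
    ∀ a b : ℝ, 0 < a → a ≤ b → alloc1 a v2 ≤ alloc1 b v2 := by
  intro a b ha hab
  have hb : 0 < b := ha.trans_le hab
  rcases lt_trichotomy b v2 with hbv | hbv | hbv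
  · have hav : a < v2 := lt_of_le_of_lt hab hbv
    have h1 : alloc1 a v2 = 1 - hiAlloc a := by
      rw [alloc1, if_neg hav.ne, if_neg (not_lt.mpr hav.le)]
    have h2 : alloc1 b v2 = 1 - hiAlloc b := by
      rw [alloc1, if_neg hbv.ne, if_neg (not_lt.mpr hbv.le)]
    rw [h1, h2]
    have := hiAlloc_anti ha hab
    linarith
  · have h2 : alloc1 b v2 = 1/2 := by rw [alloc1, if_pos hbv]
    rw [h2]
    rcases eq_or_lt_of_le hab with rfl | hav
    · rw [alloc1, if_pos hbv]
    · have hav : a < v2 := hbv ▸ hav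
      rw [alloc1, if_neg hav.ne, if_neg (not_lt.mpr hav.le)]
      have := hiAlloc_half_le ha
      linarith
  · have h2 : alloc1 b v2 = hiAlloc v2 := by
      rw [alloc1, if_neg hbv.ne', if_pos hbv]
    rw [h2]
    rcases lt_trichotomy a v2 with hav | hav | hav
    · rw [alloc1, if_neg hav.ne, if_neg (not_lt.mpr hav.le)]
      have := hiAlloc_half_le ha
      have := hiAlloc_half_le hv2
      linarith
    · rw [alloc1, if_pos hav]; exact hiAlloc_half_le hv2
    · rw [alloc1, if_neg hav.ne', if_pos hav]
end

section
/- The 4/3-approximation auction for two players with unit budgets satisfies W̄(x(v_1,v_2)) ≥ (3/4)·W̄*(v_1,v_2) for all v_1, v_2 > 0, where x is the allocation defined by: (assuming WLOG v_1 ≥ v_2) x = (1,0) if v_2 ≤ 1/3; x = (1/4 + 1/(4v_2), 3/4 − 1/(4v_2)) if 1/3 ≤ v_2 ≤ 1; x = (1/2,1/2) if v_2 ≥ 1. -/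
set_option maxHeartbeats 2000000


lemma keyA (vh vl y1 y2 : ℝ) (hvl : 0 < vl) (hle : vl ≤ vh)
    (hy1 : 0 ≤ y1) (hy2 : 0 ≤ y2) (hsum : y1 + y2 ≤ 1) :
    3 * (min 1 (vh * y1) + min 1 (vl * y2)) ≤
      4 * (min 1 (vh * hiAlloc vl) + min 1 (vl * (1 - hiAlloc vl))) := by
  have hvh : 0 < vh := lt_of_lt_of_le hvl hle
  have m1a : min 1 (vh * y1) ≤ 1 := min_le_left _ _
  have m1b : min 1 (vh * y1) ≤ vh * y1 := min_le_right _ _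
  have m2a : min 1 (vl * y2) ≤ 1 := min_le_left _ _
  have m2b : min 1 (vl * y2) ≤ vl * y2 := min_le_right _ _
  rw [hiAlloc]
  split_ifs with h13 h1
  · -- vl ≤ 1/3 : allocation (1,0)
    simp only [mul_one, sub_self, mul_zero]
    rw [min_eq_right (le_refl (0:ℝ) |>.trans zero_le_one)]
    rcases le_total vh 1 with hv | hv
    · rw [min_eq_right hv]
      nlinarith [mul_nonneg (sub_nonneg.2 hle) hy2, mul_nonneg hvh.le (sub_nonneg.2 hsum)]
    · rw [min_eq_left hv]
      nlinarith [mul_le_of_le_one_right (by linarith : (0:ℝ) ≤ vl) (by linarith : y2 ≤ 1)]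
  · -- 1/3 < vl ≤ 1
    have h3 : 1/3 < vl := lt_of_not_ge h13
    have hx2 : vl * (1 - (1/4 + 1/(4*vl))) = (3*vl - 1)/4 := by
      field_simp; ring
    rw [hx2, min_eq_right (by linarith : (3*vl-1)/4 ≤ 1)]
    set s := vh * (1/4 + 1/(4*vl)) with hs
    have hE : 4*vl*s = vh*vl + vh := by rw [hs]; field_simp
    have hE2 : 4*(vl*vh)*s = vh^2*vl + vh^2 := by rw [hs]; field_simp
    rcases min_cases 1 s with ⟨hm, hmle⟩ | ⟨hm, hmlt⟩
    · rw [hm]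
      nlinarith [mul_le_of_le_one_right hvl.le (by linarith : y2 ≤ 1)]
    · rw [hm]
      have hvh4 : vh*vl + vh ≤ 4*vl := by
        nlinarith [mul_lt_mul_of_pos_left hmlt (by linarith : (0:ℝ) < 4*vl)]
      rcases min_cases 1 (vh * y1) with ⟨hn, hnle⟩ | ⟨hn, hnlt⟩
      · -- min 1 (vh*y1) = 1
        rw [hn]
        have hm2' : min 1 (vl*y2) ≤ vl - vl*y1 := by
          nlinarith [mul_le_mul_of_nonneg_left (by linarith : y2 ≤ 1 - y1) hvl.le]
        have hq : 3*vl^2 ≤ 3*vl^2*(vh*y1) := by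
          nlinarith [mul_nonneg (mul_nonneg (by norm_num : (0:ℝ) ≤ 3) (sq_nonneg vl)) (sub_nonneg.2 hnle)]
        have hpoly : 0 ≤ vh^2*vl + vh^2 - 4*vl*vh + 3*vl^2 := by
          nlinarith [sq_nonneg ((vl+1)*vh - 2*vl),
            mul_nonneg (sq_nonneg vl) (by linarith : (0:ℝ) ≤ 3*vl-1)]
        nlinarith [hE2, hpoly, hq, mul_pos hvl hvh,
          mul_le_mul_of_nonneg_left hm2' (mul_pos hvl hvh).le]
      · rw [hn]
        have hsumv : vh*y1 + min 1 (vl*y2) ≤ vh := by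
          nlinarith [mul_nonneg (sub_nonneg.2 hle) hy2,
            mul_nonneg hvh.le (by linarith : (0:ℝ) ≤ 1 - y1 - y2)]
        have hpoly2 : 2*vh*vl - vh - 3*vl^2 + vl ≤ 0 := by
          rcases le_total vl (1/2) with hh | hh
          · nlinarith [mul_nonneg (sub_nonneg.2 hle) (by linarith : (0:ℝ) ≤ 1 - 2*vl), sq_nonneg vl]
          · nlinarith [mul_nonneg (by linarith : (0:ℝ) ≤ 2*vl - 1)
              (by linarith : (0:ℝ) ≤ 4*vl - (vh*vl + vh)),
              mul_nonneg hvl.le (sq_nonneg (vl - 1))]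
        have hfin : 3*vh ≤ 4*s + (3*vl - 1) := by nlinarith [hE, hpoly2, hvl]
        linarith
  · -- vl > 1 : allocation (1/2, 1/2)
    have h1' : 1 < vl := lt_of_not_ge h1
    have e : (1:ℝ) - 1/2 = 1/2 := by norm_num
    rw [e]
    rcases le_total vl 2 with hvl2 | hvl2
    · rcases le_total vh 2 with hvh2 | hvh2
      · rw [min_eq_right (by linarith : vh * (1/2) ≤ 1), min_eq_right (by linarith : vl * (1/2) ≤ 1)]
        rcases min_cases 1 (vh * y1) with ⟨hn, hnle⟩ | ⟨hn, hnlt⟩ <;>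
          rcases min_cases 1 (vl * y2) with ⟨hp, hple⟩ | ⟨hp, hplt⟩ <;> rw [hn, hp]
        · nlinarith [mul_nonneg (sub_nonneg.2 hle) hy2,
            mul_nonneg hvh.le (by linarith : (0:ℝ) ≤ 1 - y1 - y2)]
        · nlinarith [sq_nonneg (vh - 1),
            mul_nonneg (by linarith : (0:ℝ) ≤ vl - 1) (by linarith : (0:ℝ) ≤ 3 - vh),
            mul_nonneg hvl.le (sub_nonneg.2 hnle),
            mul_le_mul_of_nonneg_left
              (mul_le_mul_of_nonneg_left (by linarith : y2 ≤ 1 - y1) hvl.le) hvh.le]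
        · nlinarith [sq_nonneg vl,
            mul_nonneg (sub_nonneg.2 hle) (by linarith : (0:ℝ) ≤ 3 - vl),
            mul_nonneg hvh.le (sub_nonneg.2 hple),
            mul_le_mul_of_nonneg_left
              (mul_le_mul_of_nonneg_left (by linarith : y1 ≤ 1 - y2) hvh.le) hvl.le]
        · nlinarith [mul_nonneg (sub_nonneg.2 hle) hy2,
            mul_nonneg hvh.le (by linarith : (0:ℝ) ≤ 1 - y1 - y2)]
      · rw [min_eq_left (by linarith : (1:ℝ) ≤ vh * (1/2)),
          min_eq_right (by linarith : vl * (1/2) ≤ 1)]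
        linarith
    · have hvh2 : (2:ℝ) ≤ vh := le_trans hvl2 hle
      rw [min_eq_left (by linarith : (1:ℝ) ≤ vh * (1/2)),
        min_eq_left (by linarith : (1:ℝ) ≤ vl * (1/2))]
      linarith

lemma keyB (v y1 y2 : ℝ) (hv : 0 < v)
    (hy1 : 0 ≤ y1) (hy2 : 0 ≤ y2) (hsum : y1 + y2 ≤ 1) :
    3 * (min 1 (v * y1) + min 1 (v * y2)) ≤
      4 * (min 1 (v * (1/2)) + min 1 (v * (1/2))) := by
  have m1a : min 1 (v * y1) ≤ 1 := min_le_left _ _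
  have m1b : min 1 (v * y1) ≤ v * y1 := min_le_right _ _
  have m2a : min 1 (v * y2) ≤ 1 := min_le_left _ _
  have m2b : min 1 (v * y2) ≤ v * y2 := min_le_right _ _
  rcases le_total v 2 with hv2 | hv2
  · rw [min_eq_right (by linarith : v * (1/2) ≤ 1)]
    rcases min_cases 1 (v * y1) with ⟨hn, hnle⟩ | ⟨hn, hnlt⟩ <;>
      rcases min_cases 1 (v * y2) with ⟨hp, hple⟩ | ⟨hp, hplt⟩ <;> rw [hn, hp]
    · nlinarith [mul_nonneg hv.le (by linarith : (0:ℝ) ≤ 1 - y1 - y2)]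
    · nlinarith [mul_le_mul_of_nonneg_left (by linarith : y2 ≤ 1 - y1) hv.le]
    · nlinarith [mul_le_mul_of_nonneg_left (by linarith : y1 ≤ 1 - y2) hv.le]
    · nlinarith [mul_nonneg hv.le (by linarith : (0:ℝ) ≤ 1 - y1 - y2)]
  · rw [min_eq_left (by linarith : (1:ℝ) ≤ v * (1/2))]
    linarith

/-- the 4/3-approximation auction satisfies
`W̄(x(v1,v2)) ≥ (3/4)·W̄*(v1,v2)` for all positive values. -/
theorem stmt12 (v1 v2 : ℝ) (h1 : 0 < v1) (h2 : 0 < v2) :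
    (3/4) * Wstar v1 v2 ≤
      min 1 (v1 * alloc1 v1 v2) + min 1 (v2 * alloc1 v2 v1) := by
  set R := min 1 (v1 * alloc1 v1 v2) + min 1 (v2 * alloc1 v2 v1) with hR
  have key : ∀ y1 y2 : ℝ, 0 ≤ y1 → 0 ≤ y2 → y1 + y2 ≤ 1 →
      3 * (min 1 (v1 * y1) + min 1 (v2 * y2)) ≤ 4 * R := by
    intro y1 y2 hy1 hy2 hsum
    rcases lt_trichotomy v1 v2 with hlt | heq | hgt
    · have e1 : alloc1 v1 v2 = 1 - hiAlloc v1 := by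
        rw [alloc1, if_neg hlt.ne, if_neg (not_lt.2 hlt.le)]
      have e2 : alloc1 v2 v1 = hiAlloc v1 := by
        rw [alloc1, if_neg hlt.ne', if_pos hlt]
      rw [hR, e1, e2]
      have := keyA v2 v1 y2 y1 h1 hlt.le hy2 hy1 (by linarith)
      linarith
    · subst heq
      have e1 : alloc1 v1 v1 = 1/2 := by rw [alloc1, if_pos rfl]
      rw [hR, e1]
      have := keyB v1 y1 y2 h1 hy1 hy2 hsum
      linarith
    · have e1 : alloc1 v1 v2 = hiAlloc v2 := by
        rw [alloc1, if_neg hgt.ne', if_pos hgt]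
      have e2 : alloc1 v2 v1 = 1 - hiAlloc v2 := by
        rw [alloc1, if_neg hgt.ne, if_neg (not_lt.2 hgt.le)]
      rw [hR, e1, e2]
      have := keyA v1 v2 y1 y2 h2 hgt.le hy1 hy2 hsum
      linarith
  have hR0 : 0 ≤ R := by
    have := key 0 0 le_rfl le_rfl (by norm_num)
    simp only [mul_zero, min_eq_right (zero_le_one (α := ℝ))] at this
    linarith
  have hsup : Wstar v1 v2 ≤ (4/3) * R := by
    apply Real.sSup_le
    · rintro w ⟨y1, y2, hy1, hy2, hsum, rfl⟩
      have := key y1 y2 hy1 hy2 hsum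
      linarith
    · linarith
  linarith
end

section
/- Let x† maximize W̄(x) = Σ_i min(v_i(x_i), B_i) subject to x_{r₁} = 0 and Σ_{i≠r₁} x_i = 1/2, where each v_i : [0,1] → ℝ_+ is monotone non-decreasing and concave with v_i(0)=0. Then v̄_{r₁}(1/2) + W̄(x†) ≥ (1/2)·W̄*, where W̄* = max over allocations x with Σ_i x_i ≤ 1 of W̄(x) and v̄_{r₁}(1/2) = min(v_{r₁}(1/2), B_{r₁}). -/
private lemma min_double (v : ℝ → ℝ) (B : ℝ) (hB : 0 < B)
    (hconc : ConcaveOn ℝ (Set.Icc 0 1) v) (hv0 : v 0 = 0)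
    {t : ℝ} (ht0 : 0 ≤ t) (ht1 : t ≤ 1) :
    min (v t) B ≤ 2 * min (v (t/2)) B := by
  have h := hconc.2 (Set.mem_Icc.mpr ⟨le_refl 0, zero_le_one⟩)
    (Set.mem_Icc.mpr ⟨ht0, ht1⟩) (by norm_num : (0:ℝ) ≤ 1/2)
    (by norm_num : (0:ℝ) ≤ 1/2) (by norm_num)
  simp only [smul_eq_mul, hv0, mul_zero, zero_add] at h
  have ht : (1/2 : ℝ) * t = t / 2 := by ring
  rw [ht] at h
  rcases le_total (v (t/2)) B with hle | hle
  · have : min (v (t/2)) B = v (t/2) := min_eq_left hle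
    rw [this]
    calc min (v t) B ≤ v t := min_le_left _ _
      _ ≤ 2 * v (t/2) := by linarith
  · have : min (v (t/2)) B = B := min_eq_right hle
    rw [this]
    calc min (v t) B ≤ B := min_le_right _ _
      _ ≤ 2 * B := by linarith

/-- if `x†` maximizes the liquid welfare subject to
`x† r₁ = 0` and `∑_{i≠r₁} x† i = 1/2`, then
`v̄_{r₁}(1/2) + W̄(x†) ≥ (1/2)·W̄*` (stated as `W̄(x) ≤ 2(v̄_{r₁}(1/2) + W̄(x†))`
for every feasible `x`). -/
theorem stmt16 (n : ℕ) (v : Fin n → ℝ → ℝ) (B : Fin n → ℝ)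
    (hB : ∀ i, 0 < B i)
    (hmono : ∀ i, MonotoneOn (v i) (Set.Icc 0 1))
    (hconc : ∀ i, ConcaveOn ℝ (Set.Icc 0 1) (v i))
    (hv0 : ∀ i, v i 0 = 0)
    (hvnn : ∀ i, ∀ y ∈ Set.Icc (0:ℝ) 1, 0 ≤ v i y)
    (r1 : Fin n) (xdag : Fin n → ℝ)
    (hdnn : ∀ i, 0 ≤ xdag i) (hdr : xdag r1 = 0)
    (hdsum : ∑ i, xdag i = 1/2)
    (hdopt : ∀ y : Fin n → ℝ, (∀ i, 0 ≤ y i) → y r1 = 0 → ∑ i, y i = 1/2 →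
      ∑ i, min (v i (y i)) (B i) ≤ ∑ i, min (v i (xdag i)) (B i)) :
    ∀ x : Fin n → ℝ, (∀ i, 0 ≤ x i) → ∑ i, x i ≤ 1 →
      ∑ i, min (v i (x i)) (B i) ≤
        2 * (min (v r1 (1/2)) (B r1) + ∑ i, min (v i (xdag i)) (B i)) := by
  intro x hxnn hxsum
  -- there exists j ≠ r1
  obtain ⟨j, hj⟩ : ∃ j : Fin n, j ≠ r1 := by
    by_contra h
    push_neg at h
    have : ∀ i : Fin n, xdag i = 0 := fun i => (h i) ▸ hdr
    have : ∑ i, xdag i = 0 := Finset.sum_eq_zero (fun i _ => this i)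
    rw [hdsum] at this; norm_num at this
  set T : ℝ := ∑ i, (if i = r1 then 0 else x i / 2) with hT
  have hTle : T ≤ 1/2 := by
    have h1 : T ≤ ∑ i, x i / 2 := by
      apply Finset.sum_le_sum
      intro i _
      by_cases hi : i = r1
      · simp [hi]; linarith [hxnn r1]
      · simp [hi]
    have h2 : ∑ i, x i / 2 = (∑ i, x i) / 2 := by
      rw [Finset.sum_div]
    linarith
  set s : ℝ := 1/2 - T with hs
  have hs0 : 0 ≤ s := hs ▸ sub_nonneg.mpr hTle
  set y : Fin n → ℝ := fun i => (if i = r1 then 0 else x i / 2) + (if i = j then s else 0)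
    with hy
  have hynn : ∀ i, 0 ≤ y i := by
    intro i
    simp only [hy]
    have h1 : (0:ℝ) ≤ if i = r1 then 0 else x i / 2 := by
      by_cases hi : i = r1 <;> simp [hi]; linarith [hxnn i]
    have h2 : (0:ℝ) ≤ if i = j then s else 0 := by
      by_cases hi : i = j <;> simp [hi, hs0]
    linarith
  have hyr : y r1 = 0 := by
    simp [hy, Ne.symm hj]
  have hysum : ∑ i, y i = 1/2 := by
    simp only [hy]
    rw [Finset.sum_add_distrib, Finset.sum_ite_eq' Finset.univ j (fun _ => s)]
    simp [← hT, hs]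
  have hyle : ∀ i, y i ≤ 1 := by
    intro i
    have := Finset.single_le_sum (f := y) (fun k _ => hynn k) (Finset.mem_univ i)
    rw [hysum] at this
    exact this.trans (by norm_num)
  have hxle : ∀ i, x i ≤ 1 := by
    intro i
    have := Finset.single_le_sum (f := x) (fun k _ => hxnn k) (Finset.mem_univ i)
    linarith
  -- termwise bound
  have key : ∀ i, min (v i (x i)) (B i) ≤
      2 * min (v i (y i)) (B i) + (if i = r1 then 2 * min (v r1 (1/2)) (B r1) else 0) := by
    intro i
    have hdouble := min_double (v i) (B i) (hB i) (hconc i) (hv0 i) (hxnn i) (hxle i)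
    by_cases hi : i = r1
    · subst hi
      rw [if_pos rfl, hyr, hv0, min_eq_left (hB i).le]
      have hm : v i (x i / 2) ≤ v i (1/2) := (hmono i)
        (Set.mem_Icc.mpr ⟨by linarith [hxnn i], by linarith [hxle i]⟩)
        (Set.mem_Icc.mpr ⟨by norm_num, by norm_num⟩) (by linarith [hxle i])
      have : min (v i (x i / 2)) (B i) ≤ min (v i (1/2)) (B i) :=
        min_le_min hm le_rfl
      linarith
    · rw [if_neg hi]
      have hxy : x i / 2 ≤ y i := by
        simp only [hy, if_neg hi]
        have : (0:ℝ) ≤ if i = j then s else 0 := by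
          by_cases h' : i = j <;> simp [h', hs0]
        linarith
      have hm : v i (x i / 2) ≤ v i (y i) := (hmono i)
        (Set.mem_Icc.mpr ⟨by linarith [hxnn i], by linarith [hxle i]⟩)
        (Set.mem_Icc.mpr ⟨hynn i, hyle i⟩) hxy
      have : min (v i (x i / 2)) (B i) ≤ min (v i (y i)) (B i) :=
        min_le_min hm le_rfl
      linarith
  calc ∑ i, min (v i (x i)) (B i)
      ≤ ∑ i, (2 * min (v i (y i)) (B i) +
          (if i = r1 then 2 * min (v r1 (1/2)) (B r1) else 0)) :=
        Finset.sum_le_sum (fun i _ => key i)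
    _ = 2 * (∑ i, min (v i (y i)) (B i)) + 2 * min (v r1 (1/2)) (B r1) := by
        rw [Finset.sum_add_distrib, Finset.sum_ite_eq' Finset.univ r1
          (fun _ => 2 * min (v r1 (1/2)) (B r1)), ← Finset.mul_sum]
        simp
    _ ≤ 2 * (min (v r1 (1/2)) (B r1) + ∑ i, min (v i (xdag i)) (B i)) := by
        have := hdopt y hynn hyr hysum
        linarith
end

section
/- For concave (submodular) valuations, the greedy posted-price outcome satisfies: for each player i ≠ r₁ and any alternative quantity x'_i, v̄_i(x_i) ≥ v̄_i(x'_i) − p̄·x'_i, where p̄ is the price per unit of the cheapest unsold portion. That is, if player i stopped buying either because he exhausted his budget (π_i = B_i, so v̄_i(x_i) = B_i ≥ v̄_i(x'_i)) or because the marginal price exceeds his marginal value at x_i, then by concavity v_i(x'_i) − v_i(x_i) ≤ p̄·x'_i. -/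
/-! Concavity makes the secant slope from `x` antitone, so the local price bound
`v (x + ε) ≤ v x + p' ε` propagates to `v x' ≤ v x + p' (x' - x) ≤ v x + p̄ x'`;
truncating both sides at `B` preserves the inequality. -/

open Set

theorem ConcaveOn.le_add_mul_sub_of_le_add_mul {𝕜 : Type*} [Field 𝕜] [LinearOrder 𝕜]
    [IsStrictOrderedRing 𝕜] {s : Set 𝕜} {f : 𝕜 → 𝕜} (hf : ConcaveOn 𝕜 s f) {x y ε p : 𝕜}
    (hx : x ∈ s) (hy : y ∈ s) (hε : 0 < ε) (hεy : x + ε ≤ y) (hxε : x + ε ∈ s)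
    (hstep : f (x + ε) ≤ f x + p * ε) :
    f y ≤ f x + p * (y - x) := by
  have hxy : 0 < y - x := by linarith
  have hslope : slope f x y ≤ slope f x (x + ε) :=
    hf.antitoneOn_slope_gt hx ⟨hxε, by linarith⟩ ⟨hy, by linarith⟩ hεy
  rw [slope_def_field, slope_def_field, add_sub_cancel_left, div_le_iff₀ hxy] at hslope
  have hstep_slope : (f (x + ε) - f x) / ε ≤ p := by
    rw [div_le_iff₀ hε]; linarith
  linarith [mul_le_mul_of_nonneg_right hstep_slope hxy.le]

theorem min_sub_le_min_of_le_add {α : Type*} [AddCommGroup α] [LinearOrder α]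
    [IsOrderedAddMonoid α] {a b c B : α} (h : a ≤ b + c) (hc : 0 ≤ c) :
    min a B - c ≤ min b B := by
  rw [sub_le_iff_le_add, ← min_add_add_right]
  exact min_le_min h (le_add_of_nonneg_right hc)

theorem stmt17_general (v : ℝ → ℝ) (B : ℝ)
    (hmono : MonotoneOn v (Set.Icc 0 1))
    (hconc : ConcaveOn ℝ (Set.Icc 0 1) v)
    (x x' pbar : ℝ) (hx : x ∈ Set.Icc (0:ℝ) 1) (hx' : x' ∈ Set.Icc (0:ℝ) 1)
    (hpbar : 0 ≤ pbar)
    (hstop : x < x' →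
      (min (v x) B = B ∨
        ∃ p' : ℝ, p' ≤ pbar ∧ ∃ ε₀ > (0:ℝ), ∀ ε : ℝ, 0 ≤ ε → ε ≤ ε₀ →
          x + ε ≤ 1 → v (x + ε) ≤ v x + p' * ε)) :
    min (v x') B - pbar * x' ≤ min (v x) B := by
  have hpx' : 0 ≤ pbar * x' := mul_nonneg hpbar hx'.1
  suffices h : min (v x) B = B ∨ v x' ≤ v x + pbar * x' by
    rcases h with hbudget | hvalue
    · linarith [min_le_right (v x') B]
    · exact min_sub_le_min_of_le_add hvalue hpx'
  rcases le_or_gt x' x with hle | hlt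
  · exact .inr (by linarith [hmono hx' hx hle])
  rcases hstop hlt with hbudget | ⟨p', hp', ε₀, hε₀, hmarginal⟩
  · exact .inl hbudget
  set ε := min ε₀ (x' - x)
  have hε : 0 < ε := lt_min hε₀ (sub_pos.2 hlt)
  have hεx' : x + ε ≤ x' := by linarith [min_le_right ε₀ (x' - x)]
  have hxε : x + ε ∈ Icc (0:ℝ) 1 := ⟨by linarith [hx.1], by linarith [hx'.2]⟩
  have hconcave := hconc.le_add_mul_sub_of_le_add_mul hx hx' hε hεx' hxε
    (hmarginal ε hε.le (min_le_left _ _) hxε.2)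
  right
  calc v x' ≤ v x + p' * (x' - x) := hconcave
    _ ≤ v x + pbar * (x' - x) := by gcongr
    _ ≤ v x + pbar * x' := by gcongr; linarith [hx.1]

/-- for a concave monotone valuation, if the player stopped
buying at `x` (before `x'`) either because he exhausted his budget or because
the marginal price `p' ≤ p̄` exceeds his marginal value at `x`, then
`v̄(x) ≥ v̄(x') − p̄·x'`. -/
theorem stmt17 (v : ℝ → ℝ) (B : ℝ) (hB : 0 ≤ B)
    (hmono : MonotoneOn v (Set.Icc 0 1))
    (hconc : ConcaveOn ℝ (Set.Icc 0 1) v)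
    (hv0 : v 0 = 0)
    (x x' pbar : ℝ) (hx : x ∈ Set.Icc (0:ℝ) 1) (hx' : x' ∈ Set.Icc (0:ℝ) 1)
    (hpbar : 0 ≤ pbar)
    (hstop : x < x' →
      (min (v x) B = B ∨
        ∃ p' : ℝ, p' ≤ pbar ∧ ∃ ε₀ > (0:ℝ), ∀ ε : ℝ, 0 ≤ ε → ε ≤ ε₀ →
          x + ε ≤ 1 → v (x + ε) ≤ v x + p' * ε)) :
    min (v x') B - pbar * x' ≤ min (v x) B :=
  stmt17_general v B hmono hconc x x' pbar hx hx' hpbar hstop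
end

section
/- For the tight instance with two players, v_1 = 1, B_1 = +∞ (or any B_1 ≥ 2), v_2 = α > 1, B_2 = 1: the optimal liquid welfare is W̄* = 2 − 1/α, achieved by allocation (1 − 1/α, 1/α); while the allocation (0, 1) has liquid welfare 1. Hence the ratio W̄*/W̄((0,1)) = 2 − 1/α tends to 2 as α → ∞, showing the factor-2 analysis of the clinching and uniform-price auctions is tight. -/
/-- the tight instance `v = (1, α)`, `B = (B₁, 1)` with `B₁ ≥ 2`,
`α > 1`: the optimal liquid welfare is `2 - 1/α`, attained at `(1 - 1/α, 1/α)`,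
while the allocation `(0,1)` has liquid welfare `1`. -/
theorem stmt19 (α B1 : ℝ) (hα : 1 < α) (hB1 : 2 ≤ B1) :
    (∀ x1 x2 : ℝ, 0 ≤ x1 → 0 ≤ x2 → x1 + x2 ≤ 1 →
      min (1 * x1) B1 + min (α * x2) 1 ≤ 2 - 1/α) ∧
    min (1 * (1 - 1/α)) B1 + min (α * (1/α)) 1 = 2 - 1/α ∧
    min (1 * (0:ℝ)) B1 + min (α * 1) 1 = 1 := by
  have hα0 : (0:ℝ) < α := by linarith
  have hinv : 1/α < 1 := by rw [div_lt_one hα0]; exact hα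
  have hinv0 : 0 < 1/α := by positivity
  refine ⟨?_, ?_, ?_⟩
  · intro x1 x2 h1 h2 h12
    have ha : min (1 * x1) B1 ≤ x1 := by simpa using min_le_left (1*x1) B1
    rcases le_total (α * x2) 1 with h | h
    · have : min (α * x2) 1 = α * x2 := min_eq_left h
      rw [this]
      have hx2 : x2 ≤ 1/α := by rw [le_div_iff₀ hα0]; linarith [mul_comm α x2]
      have key : (α-1)*x2 ≤ (α-1)*(1/α) := mul_le_mul_of_nonneg_left hx2 (by linarith)
      have e : (α-1)*(1/α) = 1 - 1/α := by field_simp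
      linarith
    · have : min (α * x2) 1 = 1 := min_eq_right h
      rw [this]
      have hx2 : 1/α ≤ x2 := by rw [div_le_iff₀ hα0]; linarith [mul_comm α x2]
      linarith
  · rw [min_eq_left (by linarith), min_eq_left (by rw [mul_one_div, div_self (ne_of_gt hα0)])]
    ring_nf
    rw [mul_inv_cancel₀ (ne_of_gt hα0)]
    ring
  · rw [min_eq_left (by linarith), min_eq_right (by linarith [mul_one α])]
    ring
end
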